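/- Let n > 1 be a squarefree integer. If n/P(n) is strictly 2-dense and P(n) < √n, then n is strictly 2-dense. -/

import Mathlib

/-- The divisors of `n` listed in increasing order. -/
def sortedDivisors (n : ℕ) : List ℕ := n.divisors.sort (· ≤ ·)

/-- A squarefree positive integer `n` with increasing divisor list
`1 = d₁ < d₂ < ⋯ < d_τ = n` is strictly 2-dense if `d_{i+1}/d_i < 2` for all
`i` with `1 < i < τ - 1`, while `d₂/d₁ = 2 = d_τ/d_{τ-1}`. -/
def IsStrictlyTwoDense (n : ℕ) : Prop :=
  Squarefree n ∧ 0 < n ∧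
  (sortedDivisors n).getD 1 0 = 2 * (sortedDivisors n).getD 0 0 ∧
  (sortedDivisors n).getD ((sortedDivisors n).length - 1) 0 =
    2 * (sortedDivisors n).getD ((sortedDivisors n).length - 2) 0 ∧
  ∀ i : ℕ, 2 ≤ i → i + 2 ≤ (sortedDivisors n).length →
    (sortedDivisors n).getD i 0 < 2 * (sortedDivisors n).getD (i - 1) 0

/-- `largestPrimeFactor n` is the largest prime factor of `n`, with
`largestPrimeFactor 1 = 1`. -/
def largestPrimeFactor (n : ℕ) : ℕ :=
  if n ≤ 1 then 1 else n.primeFactors.sup id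

/-!
For an even squarefree `n > 1`, strict 2-density says exactly that every divisor `d` of `n` with
`2 ≤ d` and `2 * d < n` is followed by another divisor in `(d, 2d)`: the conditions on the first
and last ratios both say `2 ∣ n`, because `d ↦ n / d` reverses the increasing list of divisors.
Such an `n` also has a divisor in every interval `(x, 2x]` with `1 ≤ x < n`.

Write `n = p * m` with `p = P(n)`, so `p` is odd, `p ∤ m` and `p < m`. A divisor `p * c` of `n`
is handled by the density of `m` when `c ≥ 2`, and by a divisor of `m` in `(p, 2p]` (which cannot
be `2p`) when `c = 1`. A divisor `d` of `m` with `2 * d ≥ m` is followed by `p` when `d < p`;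
otherwise a divisor `e` of `m` in `(d / p, 2 (d / p)]` gives `p * e ∈ (d, 2d]`, and `p * e ≠ 2d`
because `p` is odd and prime to `d`.
-/

section SortedDivisors

variable {n : ℕ}

lemma sortedLT_sortedDivisors (n : ℕ) : (sortedDivisors n).SortedLT :=
  Finset.sortedLT_sort _

lemma mem_sortedDivisors {d : ℕ} : d ∈ sortedDivisors n ↔ d ∣ n ∧ n ≠ 0 := by
  simp [sortedDivisors]

lemma reverse_sortedDivisors : (sortedDivisors n).reverse = (sortedDivisors n).map (n / ·) := by
  refine ((List.Pairwise.sortedGT ?_).eq_reverse_of_mem_iff_of_sortedLT (fun d => ?_)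
    (sortedLT_sortedDivisors n)).symm
  · refine List.pairwise_map.2 ((sortedLT_sortedDivisors n).pairwise.imp_of_mem ?_)
    intro a b ha hb hab
    rw [mem_sortedDivisors] at ha hb
    exact (Nat.div_lt_div_left ha.2 hb.1 ha.1).2 hab
  · simp only [List.mem_map, mem_sortedDivisors]
    constructor
    · rintro ⟨e, ⟨he, hn⟩, rfl⟩
      exact ⟨Nat.div_dvd_of_dvd he, hn⟩
    · rintro ⟨hd, hn⟩
      exact ⟨n / d, ⟨Nat.div_dvd_of_dvd hd, hn⟩, Nat.div_div_self hd hn⟩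

lemma getD_sortedDivisors_lt_getD_iff {i j : ℕ} (hi : i < (sortedDivisors n).length)
    (hj : j < (sortedDivisors n).length) :
    (sortedDivisors n).getD i 0 < (sortedDivisors n).getD j 0 ↔ i < j := by
  rw [List.getD_eq_getElem _ _ hi, List.getD_eq_getElem _ _ hj]
  exact (sortedLT_sortedDivisors n).getElem_lt_getElem_iff

lemma getD_sortedDivisors_dvd {i : ℕ} (hi : i < (sortedDivisors n).length) :
    (sortedDivisors n).getD i 0 ∣ n := by
  rw [List.getD_eq_getElem _ _ hi]
  exact (mem_sortedDivisors.1 (List.getElem_mem hi)).1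

lemma exists_getD_sortedDivisors_eq {d : ℕ} (hd : d ∣ n) (hn : n ≠ 0) :
    ∃ i < (sortedDivisors n).length, (sortedDivisors n).getD i 0 = d := by
  obtain ⟨i, hi, rfl⟩ := List.getElem_of_mem (mem_sortedDivisors.2 ⟨hd, hn⟩)
  exact ⟨i, hi, List.getD_eq_getElem _ _ hi⟩

lemma getD_sortedDivisors_length_sub_one_sub {i : ℕ} (hi : i < (sortedDivisors n).length) :
    (sortedDivisors n).getD ((sortedDivisors n).length - 1 - i) 0 =
      n / (sortedDivisors n).getD i 0 := by
  have h := congrArg (·.getD i 0) (reverse_sortedDivisors (n := n))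
  simp only [List.getD_eq_getElem?_getD, List.getElem?_reverse hi, List.getElem?_map,
    List.getElem?_eq_getElem hi] at h ⊢
  simpa using h

lemma getD_sortedDivisors_le_getD_iff {i j : ℕ} (hi : i < (sortedDivisors n).length)
    (hj : j < (sortedDivisors n).length) :
    (sortedDivisors n).getD i 0 ≤ (sortedDivisors n).getD j 0 ↔ i ≤ j := by
  rw [← not_lt, getD_sortedDivisors_lt_getD_iff hj hi, not_lt]

lemma one_lt_length_sortedDivisors (hn : 1 < n) : 1 < (sortedDivisors n).length := by
  rw [sortedDivisors, Finset.length_sort, Finset.one_lt_card]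
  exact ⟨1, Nat.mem_divisors.2 ⟨one_dvd n, by omega⟩,
    n, Nat.mem_divisors.2 ⟨dvd_rfl, by omega⟩, hn.ne⟩

lemma getD_sortedDivisors_zero (hn : n ≠ 0) : (sortedDivisors n).getD 0 0 = 1 := by
  obtain ⟨k, hk, hk1⟩ := exists_getD_sortedDivisors_eq (one_dvd n) hn
  have h0 : 0 < (sortedDivisors n).length := by omega
  have hpos := Nat.pos_of_dvd_of_pos (getD_sortedDivisors_dvd h0) (Nat.pos_of_ne_zero hn)
  have := (getD_sortedDivisors_le_getD_iff h0 hk).2 (Nat.zero_le k)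
  omega

lemma getD_sortedDivisors_one (hn : 1 < n) : (sortedDivisors n).getD 1 0 = n.minFac := by
  have hlen := one_lt_length_sortedDivisors hn
  have h0 := getD_sortedDivisors_zero (n := n) (by omega)
  obtain ⟨k, hk, hkp⟩ := exists_getD_sortedDivisors_eq (Nat.minFac_dvd n) (by omega)
  have hp := (Nat.minFac_prime hn.ne').one_lt
  have h1 : 1 < (sortedDivisors n).getD 1 0 :=
    h0 ▸ (getD_sortedDivisors_lt_getD_iff (i := 0) (by omega) hlen).2 one_pos
  have hle := Nat.minFac_le_of_dvd h1 (getD_sortedDivisors_dvd hlen)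
  have hk1 : 1 ≤ k := by
    by_contra! hk0; rw [Nat.lt_one_iff.1 hk0] at hkp; omega
  have := (getD_sortedDivisors_le_getD_iff hlen hk).2 hk1
  omega

lemma getD_sortedDivisors_length_sub_one (hn : 1 < n) :
    (sortedDivisors n).getD ((sortedDivisors n).length - 1) 0 = n := by
  have h := getD_sortedDivisors_length_sub_one_sub (n := n) (i := 0) (by
    have := one_lt_length_sortedDivisors hn; omega)
  rwa [getD_sortedDivisors_zero (by omega), Nat.div_one] at h

lemma getD_sortedDivisors_length_sub_two (hn : 1 < n) :
    (sortedDivisors n).getD ((sortedDivisors n).length - 2) 0 = n / n.minFac := by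
  have h := getD_sortedDivisors_length_sub_one_sub (n := n) (i := 1)
    (one_lt_length_sortedDivisors hn)
  rwa [getD_sortedDivisors_one hn, Nat.sub_sub] at h

end SortedDivisors

def IsDivisorDense (n : ℕ) : Prop :=
  ∀ d, d ∣ n → 2 ≤ d → 2 * d < n → ∃ e, e ∣ n ∧ d < e ∧ e < 2 * d

theorem IsStrictlyTwoDense.isDivisorDense {n : ℕ} (hn : 1 < n) (h : IsStrictlyTwoDense n) :
    IsDivisorDense n := by
  obtain ⟨-, -, hfirst, -, hgap⟩ := h
  have hlen := one_lt_length_sortedDivisors hn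
  have hhalf := getD_sortedDivisors_length_sub_two hn
  rw [getD_sortedDivisors_zero (by omega), getD_sortedDivisors_one hn, mul_one] at hfirst
  have h2 : 2 ∣ n := hfirst ▸ Nat.minFac_dvd n
  rw [hfirst] at hhalf
  intro d hd hd2 h2d
  obtain ⟨j, hj, rfl⟩ := exists_getD_sortedDivisors_eq hd (by omega)
  have hj1 : 1 ≤ j := by
    by_contra! hj0
    rw [Nat.lt_one_iff.1 hj0, getD_sortedDivisors_zero (by omega)] at hd2
    omega
  have hj2 : j < (sortedDivisors n).length - 2 :=
    (getD_sortedDivisors_lt_getD_iff hj (by omega)).1 (by omega)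
  refine ⟨(sortedDivisors n).getD (j + 1) 0, getD_sortedDivisors_dvd (by omega),
    (getD_sortedDivisors_lt_getD_iff hj (by omega)).2 (by omega), ?_⟩
  simpa using hgap (j + 1) (by omega) (by omega)

theorem isStrictlyTwoDense_of_isDivisorDense {n : ℕ} (hn : 1 < n) (hsf : Squarefree n)
    (h2 : 2 ∣ n) (hD : IsDivisorDense n) : IsStrictlyTwoDense n := by
  have hlen := one_lt_length_sortedDivisors hn
  have h0 := getD_sortedDivisors_zero (n := n) (by omega)
  have h1 := getD_sortedDivisors_one hn
  have hlast := getD_sortedDivisors_length_sub_one hn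
  have hhalf := getD_sortedDivisors_length_sub_two hn
  rw [(Nat.minFac_eq_two_iff n).2 h2] at h1 hhalf
  refine ⟨hsf, by omega, by omega, by omega, fun i hi2 hilen => ?_⟩
  have hd2 : 2 ≤ (sortedDivisors n).getD (i - 1) 0 :=
    h1 ▸ (getD_sortedDivisors_le_getD_iff hlen (by omega)).2 (by omega)
  have hdn : 2 * (sortedDivisors n).getD i 0 ≤ n := by
    have := (getD_sortedDivisors_le_getD_iff (n := n) (i := i)
      (j := (sortedDivisors n).length - 2) (by omega) (by omega)).2 (by omega)
    omega
  obtain ⟨e, he, hde, he2⟩ := hD _ (getD_sortedDivisors_dvd (by omega)) hd2 (by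
    have := (getD_sortedDivisors_lt_getD_iff (n := n) (i := i - 1) (j := i)
      (by omega) (by omega)).2 (by omega)
    omega)
  obtain ⟨k, hk, rfl⟩ := exists_getD_sortedDivisors_eq he (by omega)
  have hik := (getD_sortedDivisors_lt_getD_iff (i := i - 1) (by omega) hk).1 hde
  have := (getD_sortedDivisors_le_getD_iff (i := i) (by omega) hk).2 (by omega)
  omega

theorem isStrictlyTwoDense_iff {n : ℕ} (hn : 1 < n) :
    IsStrictlyTwoDense n ↔ Squarefree n ∧ 2 ∣ n ∧ IsDivisorDense n := by
  refine ⟨fun h => ⟨h.1, ?_, h.isDivisorDense hn⟩,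
    fun ⟨hsf, h2, hD⟩ => isStrictlyTwoDense_of_isDivisorDense hn hsf h2 hD⟩
  have h1 := h.2.2.1
  rw [getD_sortedDivisors_zero (by omega), getD_sortedDivisors_one hn] at h1
  exact (Nat.minFac_eq_two_iff n).1 h1

theorem IsStrictlyTwoDense.one_lt {n : ℕ} (h : IsStrictlyTwoDense n) : 1 < n := by
  obtain ⟨-, hpos, hfirst, -⟩ := h
  by_contra! hn
  obtain rfl : n = 1 := by omega
  simp [sortedDivisors] at hfirst

theorem IsDivisorDense.exists_dvd_Ioc {m x : ℕ} (hD : IsDivisorDense m) (h2 : 2 ∣ m)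
    (hx : 1 ≤ x) (hxm : x < m) : ∃ e, e ∣ m ∧ x < e ∧ e ≤ 2 * x := by
  obtain rfl | hx2 := hx.eq_or_lt
  · exact ⟨2, h2, one_lt_two, le_rfl⟩
  set e₀ := Nat.findGreatest (· ∣ m) x
  have he₀ : e₀ ∣ m := Nat.findGreatest_spec (P := (· ∣ m)) hx2 h2
  have h2e₀ : 2 ≤ e₀ := Nat.le_findGreatest hx2 h2
  have he₀x : e₀ ≤ x := Nat.findGreatest_le x
  rcases lt_or_ge (2 * e₀) m with h | h
  · obtain ⟨e, he, he₀e, he2⟩ := hD e₀ he₀ h2e₀ h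
    refine ⟨e, he, ?_, by omega⟩
    by_contra! hex
    exact Nat.findGreatest_is_greatest he₀e hex he
  · exact ⟨m, dvd_rfl, hxm, by omega⟩

lemma lt_mul_and_mul_lt_two_mul_of_div_lt {p d e : ℕ} (hp : p.Prime) (hp2 : p ≠ 2)
    (hpd : ¬p ∣ d) (hde : d / p < e) (he : e ≤ 2 * (d / p)) : d < p * e ∧ p * e < 2 * d := by
  refine ⟨by rw [mul_comm]; exact (Nat.div_lt_iff_lt_mul hp.pos).1 hde, ?_⟩
  have hle : p * e ≤ 2 * d := calc
    p * e ≤ p * (2 * (d / p)) := Nat.mul_le_mul_left p he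
    _ = 2 * (p * (d / p)) := by ring
    _ ≤ 2 * d := Nat.mul_le_mul_left 2 (Nat.mul_div_le d p)
  refine hle.lt_of_ne fun heq => ?_
  rcases (Nat.Prime.dvd_mul hp).1 ⟨e, heq.symm⟩ with h | h
  · exact hp2 ((Nat.prime_dvd_prime_iff_eq hp Nat.prime_two).1 h)
  · exact hpd h

theorem IsDivisorDense.prime_mul {p m : ℕ} (hp : p.Prime) (hpm : ¬p ∣ m) (h2 : 2 ∣ m)
    (hlt : p < m) (hD : IsDivisorDense m) : IsDivisorDense (p * m) := by
  have hp2 : p ≠ 2 := fun h => hpm (h ▸ h2)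
  intro d hd hd2 h2d
  by_cases hpd : p ∣ d
  · obtain ⟨c, rfl⟩ := hpd
    have hc : c ∣ m := Nat.dvd_of_mul_dvd_mul_left hp.pos hd
    obtain rfl | hc2 : c = 1 ∨ 2 ≤ c := by
      rcases Nat.eq_zero_or_pos c with rfl | hc0 <;> omega
    · obtain ⟨e, he, hpe, he2⟩ := hD.exists_dvd_Ioc h2 hp.one_lt.le hlt
      have hne : e ≠ 2 * p := by
        rintro rfl
        exact hpm ((dvd_mul_left p 2).trans he)
      exact ⟨e, he.mul_left p, by omega, by omega⟩
    · have h2c : 2 * c < m := by nlinarith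
      obtain ⟨e, he, hce, he2⟩ := hD c hc hc2 h2c
      refine ⟨p * e, mul_dvd_mul_left p he, mul_lt_mul_of_pos_left hce hp.pos, ?_⟩
      calc p * e < p * (2 * c) := mul_lt_mul_of_pos_left he2 hp.pos
        _ = 2 * (p * c) := by ring
  · have hdm : d ∣ m := ((hp.coprime_iff_not_dvd.2 hpd).symm).dvd_of_dvd_mul_left hd
    rcases lt_or_ge (2 * d) m with hm | hm
    · obtain ⟨e, he, hde⟩ := hD d hdm hd2 hm
      exact ⟨e, he.mul_left p, hde⟩
    rcases lt_or_ge d p with hdp | hpd'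
    · exact ⟨p, dvd_mul_right p m, hdp, by omega⟩
    · have hdm' := Nat.le_of_dvd (by omega) hdm
      have hx := Nat.div_lt_self (n := d) (by omega) hp.one_lt
      obtain ⟨e, he, hxe, he2⟩ :=
        hD.exists_dvd_Ioc h2 (Nat.div_pos hpd' hp.pos) (by omega)
      exact ⟨p * e, mul_dvd_mul_left p he,
        lt_mul_and_mul_lt_two_mul_of_div_lt hp hp2 hpd hxe he2⟩

lemma largestPrimeFactor_mem_primeFactors {n : ℕ} (hn : 1 < n) :
    largestPrimeFactor n ∈ n.primeFactors := by
  rw [largestPrimeFactor, if_neg hn.not_ge]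
  obtain ⟨p, hp, hsup⟩ := Finset.exists_mem_eq_sup _ (Nat.nonempty_primeFactors.2 hn) id
  exact hsup ▸ hp

theorem IsStrictlyTwoDense.prime_mul {p m : ℕ} (hp : p.Prime) (hsf : Squarefree (p * m))
    (hlt : p < m) (hm : IsStrictlyTwoDense m) : IsStrictlyTwoDense (p * m) := by
  have hm1 := hm.one_lt
  obtain ⟨-, h2, hD⟩ := (isStrictlyTwoDense_iff hm1).1 hm
  have hpm : ¬p ∣ m := fun h => hp.not_isUnit (hsf p (mul_dvd_mul_left p h))
  exact (isStrictlyTwoDense_iff (by nlinarith [hp.two_le])).2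
    ⟨hsf, h2.mul_left p, hD.prime_mul hp hpm h2 hlt⟩

theorem strictlyTwoDense_of_div_largestPrimeFactor (n : ℕ) (hn : 1 < n)
    (hsf : Squarefree n)
    (h1 : IsStrictlyTwoDense (n / largestPrimeFactor n))
    (h2 : (largestPrimeFactor n : ℝ) < Real.sqrt (n : ℝ)) :
    IsStrictlyTwoDense n := by
  set p := largestPrimeFactor n
  have hpn := largestPrimeFactor_mem_primeFactors hn
  have hp : p.Prime := Nat.prime_of_mem_primeFactors hpn
  have hnpm : n = p * (n / p) := (Nat.mul_div_cancel' (Nat.dvd_of_mem_primeFactors hpn)).symm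
  have hpp : p * p < n := by
    have := (Real.lt_sqrt (Nat.cast_nonneg p)).1 h2
    rw [sq] at this
    exact_mod_cast this
  rw [hnpm] at hsf hpp ⊢
  exact h1.prime_mul hp hsf (Nat.lt_of_mul_lt_mul_left hpp)
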